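/- arXiv:1903.07451 — 10 statements merged into one kernel-verified Lean document; each statement's English description precedes it below -/
import Mathlib

section
/- Suppose |a|_p < α = β where α = |x̂₁|_p = |x̂₂|_p for f(x) = (ax²+bx)/(x²+dx+b) on ℂ_p. Then the open ball U_α(0) = {x : |x|_p < α} is invariant under f, and for every x with |x|_p < α one has |f(x)|_p = |x|_p. In particular U_α(0) is contained in the Siegel disk of the fixed point 0. -/
/-- Case `|a| < α = β`: on the open ball `U_α(0)` one has `|f(x)| = |x|`,
so the ball is invariant and lies in the Siegel disk of the fixed point `0`. -/
theorem stmt4 {K : Type*} [NontriviallyNormedField K] [IsAlgClosed K]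
    [IsUltrametricDist K] (a b d z₁ z₂ : K) (hab : a*b ≠ 0) (had : a ≠ d)
    (hsum : z₁ + z₂ = -d) (hprod : z₁ * z₂ = b)
    (hβ : ‖z₂‖ = ‖z₁‖) (ha : ‖a‖ < ‖z₁‖) :
    ∀ x : K, ‖x‖ < ‖z₁‖ → ‖(a*x^2 + b*x)/(x^2 + d*x + b)‖ = ‖x‖ := by
  intro x hx
  have hz₁ : (0:ℝ) < ‖z₁‖ := lt_of_le_of_lt (norm_nonneg a) ha
  have hb : ‖b‖ = ‖z₁‖ * ‖z₁‖ := by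
    rw [← hprod, norm_mul, hβ]
  have hd : ‖d‖ ≤ ‖z₁‖ := by
    calc ‖d‖ = ‖z₁ + z₂‖ := by rw [hsum, norm_neg]
    _ ≤ max ‖z₁‖ ‖z₂‖ := IsUltrametricDist.norm_add_le_max _ _
    _ = ‖z₁‖ := by rw [hβ, max_self]
  -- denominator norm = ‖b‖
  have hx2 : ‖x^2‖ < ‖b‖ := by
    rw [hb, pow_two, norm_mul]
    exact mul_lt_mul'' hx hx (norm_nonneg x) (norm_nonneg x)
  have hdx : ‖d*x‖ < ‖b‖ := by
    rw [hb, norm_mul]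
    calc ‖d‖ * ‖x‖ ≤ ‖z₁‖ * ‖x‖ := by
          exact mul_le_mul_of_nonneg_right hd (norm_nonneg x)
    _ < ‖z₁‖ * ‖z₁‖ := by exact mul_lt_mul_of_pos_left hx hz₁
  have hsum2 : ‖x^2 + d*x‖ < ‖b‖ :=
    lt_of_le_of_lt (IsUltrametricDist.norm_add_le_max _ _) (max_lt hx2 hdx)
  have hden : ‖x^2 + d*x + b‖ = ‖b‖ := by
    rw [IsUltrametricDist.norm_add_eq_max_of_norm_ne_norm (ne_of_lt hsum2),
      max_eq_right hsum2.le]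
  -- numerator norm = ‖x‖ * ‖b‖
  have hax : ‖a*x‖ < ‖b‖ := by
    rw [hb, norm_mul]
    exact mul_lt_mul'' ha hx (norm_nonneg a) (norm_nonneg x)
  have hnum : ‖a*x^2 + b*x‖ = ‖x‖ * ‖b‖ := by
    have : a*x^2 + b*x = x * (a*x + b) := by ring
    rw [this, norm_mul,
      IsUltrametricDist.norm_add_eq_max_of_norm_ne_norm (ne_of_lt hax),
      max_eq_right hax.le]
  have hbne : ‖b‖ ≠ 0 := by
    rw [hb]; positivity
  rw [norm_div, hnum, hden, mul_div_assoc, div_self hbne, mul_one]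
end

section
/- Suppose |a|_p < α = β for f(x) = (ax²+bx)/(x²+dx+b) on ℂ_p. If α < |x|_p < α²/|a|_p and x is not a root of the denominator, then |f(x)|_p = α²/|x|_p, and if |x|_p > α²/|a|_p then |f(x)|_p = |a|_p. -/
open IsUltrametricDist in
lemma norm_add_right_of_lt {K : Type*} [NontriviallyNormedField K] [IsUltrametricDist K]
    {u v : K} (h : ‖v‖ < ‖u‖) : ‖u + v‖ = ‖u‖ := by
  rw [norm_add_eq_max_of_norm_ne_norm (by exact ne_of_gt h)]
  exact max_eq_left h.le

/-- Case `|a| < α = β`: if `α < |x| < α²/|a|` then `|f(x)| = α²/|x|`, and if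
`|x| > α²/|a|` then `|f(x)| = |a|`. -/
theorem stmt5 {K : Type*} [NontriviallyNormedField K] [IsAlgClosed K]
    [IsUltrametricDist K] (a b d z₁ z₂ : K) (hab : a*b ≠ 0) (had : a ≠ d)
    (hsum : z₁ + z₂ = -d) (hprod : z₁ * z₂ = b)
    (hβ : ‖z₂‖ = ‖z₁‖) (ha : ‖a‖ < ‖z₁‖) :
    ∀ x : K, x^2 + d*x + b ≠ 0 →
      (‖z₁‖ < ‖x‖ → ‖x‖ < ‖z₁‖^2/‖a‖ →
        ‖(a*x^2 + b*x)/(x^2 + d*x + b)‖ = ‖z₁‖^2/‖x‖) ∧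
      (‖x‖ > ‖z₁‖^2/‖a‖ →
        ‖(a*x^2 + b*x)/(x^2 + d*x + b)‖ = ‖a‖) := by
  have ha0 : a ≠ 0 := fun h => hab (by simp [h])
  have hb0 : b ≠ 0 := fun h => hab (by simp [h])
  have hz1 : (0:ℝ) < ‖z₁‖ :=
    norm_pos_iff.mpr (fun h => hb0 (by rw [← hprod, h, zero_mul]))
  have hna : (0:ℝ) < ‖a‖ := norm_pos_iff.mpr ha0
  have hbnorm : ‖b‖ = ‖z₁‖^2 := by
    rw [← hprod, norm_mul, hβ, sq]
  intro x hden
  have hfact : x^2 + d*x + b = (x - z₁) * (x - z₂) := by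
    have : d = -(z₁ + z₂) := by rw [hsum]; ring
    rw [this, ← hprod]; ring
  -- denominator norm when ‖x‖ > ‖z₁‖
  have hdnorm : ‖z₁‖ < ‖x‖ → ‖x^2 + d*x + b‖ = ‖x‖^2 := by
    intro hx
    rw [hfact, norm_mul, sub_eq_add_neg, sub_eq_add_neg,
      norm_add_right_of_lt (by rwa [norm_neg]),
      norm_add_right_of_lt (by rwa [norm_neg, hβ]), sq]
  constructor
  · intro hx1 hx2
    have hnum : ‖a*x^2 + b*x‖ = ‖z₁‖^2 * ‖x‖ := by
      have hax : ‖a*x^2‖ < ‖b*x‖ := by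
        rw [norm_mul, norm_mul, hbnorm, sq, norm_mul]
        have hxpos : (0:ℝ) < ‖x‖ := hz1.trans hx1
        have : ‖a‖ * ‖x‖ < ‖z₁‖^2 := by
          rwa [lt_div_iff₀ hna, mul_comm] at hx2
        calc ‖a‖ * (‖x‖ * ‖x‖) = (‖a‖ * ‖x‖) * ‖x‖ := by ring
          _ < ‖z₁‖^2 * ‖x‖ := by
              exact mul_lt_mul_of_pos_right this hxpos
      rw [add_comm, norm_add_right_of_lt hax, norm_mul, hbnorm]
    rw [norm_div, hnum, hdnorm hx1, sq]
    have hxpos : (0:ℝ) < ‖x‖ := hz1.trans hx1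
    field_simp
  · intro hx
    have hx1 : ‖z₁‖ < ‖x‖ := by
      refine lt_of_lt_of_le ?_ hx.le
      rw [lt_div_iff₀ hna, sq]
      exact mul_lt_mul_of_pos_left ha hz1
    have hnum : ‖a*x^2 + b*x‖ = ‖a‖ * ‖x‖^2 := by
      have hax : ‖b*x‖ < ‖a*x^2‖ := by
        rw [norm_mul, norm_mul, hbnorm, norm_pow]
        have hxpos : (0:ℝ) < ‖x‖ := hz1.trans hx1
        have : ‖z₁‖^2 < ‖a‖ * ‖x‖ := by
          rw [gt_iff_lt, div_lt_iff₀ hna] at hx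
          rwa [mul_comm] at hx
        calc ‖z₁‖^2 * ‖x‖ < (‖a‖ * ‖x‖) * ‖x‖ := mul_lt_mul_of_pos_right this hxpos
          _ = ‖a‖ * ‖x‖^2 := by ring
      rw [norm_add_right_of_lt hax, norm_mul, norm_pow]
    rw [norm_div, hnum, hdnorm hx1]
    have hxpos : (0:ℝ) < ‖x‖ := hz1.trans hx1
    field_simp
end

section
/- Suppose |a|_p < α = β and |d|_p < α for f(x) = (ax²+bx)/(x²+dx+b) on ℂ_p. Then the fixed point x₂ = a-d satisfies |x₂|_p < α and |f'(x₂)|_p = 1, i.e., x₂ is an indifferent fixed point. -/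
/-!
The point `x = a - d` is the nonzero solution of `a x² + b x = x (x² + d x + b)`, so the quotient
rule at this fixed point gives `f'(x) = (b + d x) / (x² + d x + b)`. Ultrametrically `‖x‖ < α`,
`‖d‖ < α` and `‖b‖ = ‖z₁ z₂‖ = α²`, so `b` dominates both numerator and denominator, which
therefore both have norm `α²`.
-/

namespace IsUltrametricDist

variable {G : Type*} [SeminormedAddGroup G] [IsUltrametricDist G]

lemma norm_add_lt_of_lt {x y : G} {r : ℝ} (hx : ‖x‖ < r) (hy : ‖y‖ < r) : ‖x + y‖ < r :=
  (norm_add_le_max x y).trans_lt (max_lt hx hy)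

lemma norm_sub_lt_of_lt {x y : G} {r : ℝ} (hx : ‖x‖ < r) (hy : ‖y‖ < r) : ‖x - y‖ < r := by
  simpa only [sub_eq_add_neg] using norm_add_lt_of_lt hx (by rwa [norm_neg])

lemma norm_add_eq_left_of_norm_lt {x y : G} (h : ‖y‖ < ‖x‖) : ‖x + y‖ = ‖x‖ := by
  rw [norm_add_eq_max_of_norm_ne_norm h.ne', max_eq_left h.le]

end IsUltrametricDist

lemma HasDerivAt.div_of_fixedPoint {K : Type*} [NontriviallyNormedField K] {N D : K → K}
    {n e x : K} (hN : HasDerivAt N n x) (hD : HasDerivAt D e x) (hDx : D x ≠ 0)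
    (hfix : N x = x * D x) : HasDerivAt (fun y => N y / D y) ((n - x * e) / D x) x := by
  refine (hN.div hD hDx).congr_deriv ?_
  rw [hfix]
  field_simp

lemma hasDerivAt_quadraticRatio_sub {K : Type*} [NontriviallyNormedField K] {a b d : K}
    (hD : (a - d) ^ 2 + d * (a - d) + b ≠ 0) :
    HasDerivAt (fun x : K => (a * x ^ 2 + b * x) / (x ^ 2 + d * x + b))
      ((b + d * (a - d)) / ((a - d) ^ 2 + d * (a - d) + b)) (a - d) := by
  have hN : HasDerivAt (fun x : K => a * x ^ 2 + b * x) (a * (2 * (a - d)) + b) (a - d) := by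
    simpa [Pi.add_def] using
      ((hasDerivAt_pow 2 (a - d)).const_mul a).add ((hasDerivAt_id (a - d)).const_mul b)
  have hD' : HasDerivAt (fun x : K => x ^ 2 + d * x + b) (2 * (a - d) + d) (a - d) := by
    simpa using ((hasDerivAt_pow 2 (a - d)).add ((hasDerivAt_id (a - d)).const_mul d)).add_const b
  exact (hN.div_of_fixedPoint hD' hD (by ring)).congr_deriv (by ring)

open IsUltrametricDist in
theorem stmt6_general {K : Type*} [NontriviallyNormedField K]
    [IsUltrametricDist K] (a b d z₁ z₂ : K)
    (hprod : z₁ * z₂ = b)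
    (hβ : ‖z₂‖ = ‖z₁‖) (ha : ‖a‖ < ‖z₁‖) (hd : ‖d‖ < ‖z₁‖) :
    ‖a - d‖ < ‖z₁‖ ∧
    ∃ L : K, HasDerivAt (fun x : K => (a*x^2 + b*x)/(x^2 + d*x + b)) L (a - d) ∧
      ‖L‖ = 1 := by
  set α := ‖z₁‖
  have hb : ‖b‖ = α ^ 2 := by rw [← hprod, norm_mul, hβ, sq]
  have hx : ‖a - d‖ < α := norm_sub_lt_of_lt ha hd
  have hα : 0 < α := (norm_nonneg _).trans_lt hx
  have hdx : ‖d * (a - d)‖ < ‖b‖ := by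
    rw [hb, norm_mul, sq]; exact mul_lt_mul'' hd hx (norm_nonneg _) (norm_nonneg _)
  have hx2 : ‖(a - d) ^ 2‖ < ‖b‖ := by
    rw [hb, norm_pow]; exact pow_lt_pow_left₀ hx (norm_nonneg _) two_ne_zero
  have hnum : ‖b + d * (a - d)‖ = α ^ 2 := by rw [norm_add_eq_left_of_norm_lt hdx, hb]
  have hden : ‖(a - d) ^ 2 + d * (a - d) + b‖ = α ^ 2 := by
    rw [add_comm _ b, norm_add_eq_left_of_norm_lt (norm_add_lt_of_lt hx2 hdx), hb]
  have hden0 : (a - d) ^ 2 + d * (a - d) + b ≠ 0 := by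
    rw [← norm_pos_iff, hden]; positivity
  refine ⟨hx, _, hasDerivAt_quadraticRatio_sub hden0, ?_⟩
  rw [norm_div, hnum, hden, div_self (by positivity)]

/-- Case `|a| < α = β` and `|d| < α`: the fixed point `x₂ = a - d` satisfies
`|x₂| < α` and `|f'(x₂)| = 1`, i.e. `x₂` is indifferent. -/
theorem stmt6 {K : Type*} [NontriviallyNormedField K] [IsAlgClosed K]
    [IsUltrametricDist K] (a b d z₁ z₂ : K) (hab : a*b ≠ 0) (had : a ≠ d)
    (hsum : z₁ + z₂ = -d) (hprod : z₁ * z₂ = b)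
    (hβ : ‖z₂‖ = ‖z₁‖) (ha : ‖a‖ < ‖z₁‖) (hd : ‖d‖ < ‖z₁‖) :
    ‖a - d‖ < ‖z₁‖ ∧
    ∃ L : K, HasDerivAt (fun x : K => (a*x^2 + b*x)/(x^2 + d*x + b)) L (a - d) ∧
      ‖L‖ = 1 :=
  stmt6_general a b d z₁ z₂ hprod hβ ha hd
end

section
/- Suppose |a|_p > α = β for f(x)=(ax²+bx)/(x²+dx+b) on ℂ_p. Then for every x with |x|_p < α²/|a|_p one has |f(x)|_p = |x|_p, so the open ball U_{α²/|a|_p}(0) is f-invariant sphere-by-sphere (the Siegel disk of 0 contains this ball). -/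
/-- Case `|a| > α = β`: for every `x` with `|x| < α²/|a|` one has
`|f(x)| = |x|`; the ball `U_{α²/|a|}(0)` is invariant sphere-by-sphere. -/
theorem stmt9 {K : Type*} [NontriviallyNormedField K] [IsAlgClosed K]
    [IsUltrametricDist K] (a b d z₁ z₂ : K) (hab : a*b ≠ 0) (had : a ≠ d)
    (hsum : z₁ + z₂ = -d) (hprod : z₁ * z₂ = b)
    (hβ : ‖z₂‖ = ‖z₁‖) (ha : ‖z₁‖ < ‖a‖) :
    ∀ x : K, ‖x‖ < ‖z₁‖^2/‖a‖ →
      ‖(a*x^2 + b*x)/(x^2 + d*x + b)‖ = ‖x‖ := by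
  intro x hx
  have hb : b ≠ 0 := fun h => hab (by rw [h, mul_zero])
  have hz₁ : z₁ ≠ 0 := fun h => hb (by rw [← hprod, h, zero_mul])
  have hz₁pos : (0:ℝ) < ‖z₁‖ := norm_pos_iff.mpr hz₁
  have hapos : (0:ℝ) < ‖a‖ := lt_trans hz₁pos ha
  have hbnorm : ‖b‖ = ‖z₁‖^2 := by
    rw [← hprod, norm_mul, hβ, sq]
  -- ‖x‖ < ‖z₁‖
  have hxz : ‖x‖ < ‖z₁‖ := by
    calc ‖x‖ < ‖z₁‖^2/‖a‖ := hx
    _ < ‖z₁‖^2/‖z₁‖ := by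
        apply div_lt_div_of_pos_left _ hz₁pos ha
        positivity
    _ = ‖z₁‖ := by field_simp [sq]
  -- numerator
  have hax : ‖a*x‖ < ‖b‖ := by
    rw [norm_mul, hbnorm]
    calc ‖a‖*‖x‖ < ‖a‖ * (‖z₁‖^2/‖a‖) := by
          exact mul_lt_mul_of_pos_left hx hapos
    _ = ‖z₁‖^2 := by field_simp
  have hnum : ‖a*x^2 + b*x‖ = ‖x‖ * ‖z₁‖^2 := by
    have : a*x^2 + b*x = x * (a*x + b) := by ring
    rw [this, norm_mul]
    have h1 : ‖a*x + b‖ = ‖b‖ := by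
      rw [IsUltrametricDist.norm_add_eq_max_of_norm_ne_norm (ne_of_lt hax),
        max_eq_right (le_of_lt hax)]
    rw [h1, hbnorm]
  -- denominator
  have hden : x^2 + d*x + b = (x - z₁) * (x - z₂) := by
    have hd : d = -(z₁ + z₂) := by rw [hsum]; ring
    rw [hd, ← hprod]; ring
  have hsub : ∀ z : K, ‖z‖ = ‖z₁‖ → ‖x - z‖ = ‖z₁‖ := by
    intro z hz
    have : ‖x‖ ≠ ‖-z‖ := by rw [norm_neg, hz]; exact ne_of_lt hxz
    rw [sub_eq_add_neg, IsUltrametricDist.norm_add_eq_max_of_norm_ne_norm this,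
      norm_neg, hz, max_eq_right (le_of_lt hxz)]
  have hdnorm : ‖x^2 + d*x + b‖ = ‖z₁‖^2 := by
    rw [hden, norm_mul, hsub z₁ rfl, hsub z₂ hβ, sq]
  rw [norm_div, hnum, hdnorm, mul_div_assoc, div_self (by positivity), mul_one]
end

section
/- Suppose |a|_p > α = β for f(x)=(ax²+bx)/(x²+dx+b) on ℂ_p. Then the fixed point x₂ = a-d satisfies |x₂|_p = |a|_p and |f'(x₂)|_p < 1 (x₂ is attracting). Moreover, for every x in the sphere S_{|a|_p}(0) not eventually mapped to a pole, |f(x)-x₂|_p < |x-x₂|_p. -/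
/-!
Write `x₂ = a - d` and `g x = (d x + b)/(x² + d x + b)`. Clearing denominators gives
`f x - x₂ = (x - x₂) g x`, so `x₂` is fixed and `f'(x₂) = g(x₂)`. Since `z₁, z₂` are the roots
of `x² + d x + b` and `|z₁| = |z₂| = α`, ultrametricity gives `|d| ≤ α` and `|b| = α²`; hence
for `|x| > α` the denominator of `g` has norm `|x|²` while its numerator has norm at most
`α |x|`, so `|g x| ≤ α / |x| < 1`. Both claims follow, as `|x₂| = |a| > α` by `|d| ≤ α`.
-/

open Filter Topology

lemma IsUltrametricDist.norm_sub_eq_left_of_lt {E : Type*} [SeminormedAddGroup E]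
    [IsUltrametricDist E] {x y : E} (h : ‖y‖ < ‖x‖) : ‖x - y‖ = ‖x‖ := by
  rw [sub_eq_add_neg, norm_add_eq_max_of_norm_ne_norm (by rw [norm_neg]; exact h.ne'),
    norm_neg, max_eq_left h.le]

theorem hasDerivAt_of_eventually_sub_eq_sub_mul {𝕜 : Type*} [NontriviallyNormedField 𝕜]
    {f g : 𝕜 → 𝕜} {c y : 𝕜} (hg : ContinuousAt g c)
    (hf : ∀ᶠ x in 𝓝 c, f x - y = (x - c) * g x) : HasDerivAt f (g c) c := by
  have hfc : f c = y := by simpa [sub_eq_zero] using hf.self_of_nhds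
  rw [hasDerivAt_iff_tendsto_slope]
  refine (hg.tendsto.mono_left nhdsWithin_le_nhds).congr' ?_
  filter_upwards [nhdsWithin_le_nhds hf, self_mem_nhdsWithin] with x hx hxc
  rw [slope_def_field, hfc, hx, mul_div_cancel_left₀ _ (sub_ne_zero.2 hxc)]

lemma div_sub_sub_eq_sub_mul_div {K : Type*} [Field K] {a b d x : K}
    (hx : x ^ 2 + d * x + b ≠ 0) :
    (a * x ^ 2 + b * x) / (x ^ 2 + d * x + b) - (a - d) =
      (x - (a - d)) * ((d * x + b) / (x ^ 2 + d * x + b)) := by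
  rw [← mul_div_assoc, eq_div_iff hx, sub_mul, div_mul_cancel₀ _ hx]
  ring

section Ultrametric

variable {K : Type*} [NormedField K] [IsUltrametricDist K] {b d x z₁ z₂ : K}

lemma norm_le_of_add_eq_neg (hsum : z₁ + z₂ = -d) (hβ : ‖z₂‖ = ‖z₁‖) : ‖d‖ ≤ ‖z₁‖ := by
  rw [← norm_neg d, ← hsum]
  exact (IsUltrametricDist.norm_add_le_max _ _).trans (max_le le_rfl hβ.le)

lemma norm_sq_add_mul_add_eq (hsum : z₁ + z₂ = -d) (hprod : z₁ * z₂ = b)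
    (hβ : ‖z₂‖ = ‖z₁‖) (hx : ‖z₁‖ < ‖x‖) : ‖x ^ 2 + d * x + b‖ = ‖x‖ ^ 2 := by
  have hfactor : x ^ 2 + d * x + b = (x - z₁) * (x - z₂) := by
    rw [← hprod, show d = -(z₁ + z₂) by rw [hsum, neg_neg]]
    ring
  rw [hfactor, norm_mul, IsUltrametricDist.norm_sub_eq_left_of_lt hx,
    IsUltrametricDist.norm_sub_eq_left_of_lt (hβ ▸ hx), sq]

lemma norm_mul_add_le (hsum : z₁ + z₂ = -d) (hprod : z₁ * z₂ = b)
    (hβ : ‖z₂‖ = ‖z₁‖) (hx : ‖z₁‖ ≤ ‖x‖) : ‖d * x + b‖ ≤ ‖z₁‖ * ‖x‖ := by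
  refine (IsUltrametricDist.norm_add_le_max _ _).trans (max_le ?_ ?_)
  · rw [norm_mul]
    exact mul_le_mul_of_nonneg_right (norm_le_of_add_eq_neg hsum hβ) (norm_nonneg x)
  · rw [← hprod, norm_mul, hβ]
    exact mul_le_mul_of_nonneg_left hx (norm_nonneg z₁)

lemma norm_mul_add_div_sq_add_mul_add_lt_one (hsum : z₁ + z₂ = -d) (hprod : z₁ * z₂ = b)
    (hβ : ‖z₂‖ = ‖z₁‖) (hx : ‖z₁‖ < ‖x‖) : ‖(d * x + b) / (x ^ 2 + d * x + b)‖ < 1 := by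
  have hx₀ : 0 < ‖x‖ := (norm_nonneg z₁).trans_lt hx
  rw [norm_div, norm_sq_add_mul_add_eq hsum hprod hβ hx, div_lt_one (by positivity), sq]
  exact (norm_mul_add_le hsum hprod hβ hx.le).trans_lt (mul_lt_mul_of_pos_right hx hx₀)

lemma sq_add_mul_add_ne_zero (hsum : z₁ + z₂ = -d) (hprod : z₁ * z₂ = b)
    (hβ : ‖z₂‖ = ‖z₁‖) (hx : ‖z₁‖ < ‖x‖) : x ^ 2 + d * x + b ≠ 0 := by
  rw [← norm_pos_iff, norm_sq_add_mul_add_eq hsum hprod hβ hx]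
  exact pow_pos ((norm_nonneg z₁).trans_lt hx) 2

end Ultrametric

theorem stmt10_general {K : Type*} [NontriviallyNormedField K]
    [IsUltrametricDist K] (a b d z₁ z₂ : K)
    (hsum : z₁ + z₂ = -d) (hprod : z₁ * z₂ = b)
    (hβ : ‖z₂‖ = ‖z₁‖) (ha : ‖z₁‖ < ‖a‖) :
    ‖a - d‖ = ‖a‖ ∧
    (∃ L : K, HasDerivAt (fun x : K => (a*x^2 + b*x)/(x^2 + d*x + b)) L (a - d) ∧
      ‖L‖ < 1) ∧
    ∀ x : K, ‖x‖ = ‖a‖ → x ≠ a - d →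
      ‖(a*x^2 + b*x)/(x^2 + d*x + b) - (a - d)‖ < ‖x - (a - d)‖ := by
  have hx₂ : ‖a - d‖ = ‖a‖ :=
    IsUltrametricDist.norm_sub_eq_left_of_lt ((norm_le_of_add_eq_neg hsum hβ).trans_lt ha)
  have hden := fun x => sq_add_mul_add_ne_zero (x := x) hsum hprod hβ
  have hmult := fun x => norm_mul_add_div_sq_add_mul_add_lt_one (x := x) hsum hprod hβ
  refine ⟨hx₂, ⟨_, ?_, hmult _ (hx₂ ▸ ha)⟩, fun x hx hne => ?_⟩
  · refine hasDerivAt_of_eventually_sub_eq_sub_mul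
      (g := fun x => (d * x + b) / (x ^ 2 + d * x + b)) (y := a - d) ?_ ?_
    · exact ContinuousAt.div (by fun_prop) (by fun_prop) (hden _ (hx₂ ▸ ha))
    · filter_upwards [(isOpen_lt continuous_const continuous_norm).mem_nhds (hx₂ ▸ ha)]
        with x hx using div_sub_sub_eq_sub_mul_div (hden x hx)
  · rw [div_sub_sub_eq_sub_mul_div (hden x (hx ▸ ha)), norm_mul]
    exact mul_lt_of_lt_one_right (norm_pos_iff.2 (sub_ne_zero.2 hne)) (hmult x (hx ▸ ha))

/-- Case `|a| > α = β`: `x₂ = a - d` satisfies `|x₂| = |a|` and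
`|f'(x₂)| < 1`; moreover on the sphere `S_{|a|}(0)` (minus `x₂` itself)
one has `|f(x) - x₂| < |x - x₂|`. -/
theorem stmt10 {K : Type*} [NontriviallyNormedField K] [IsAlgClosed K]
    [IsUltrametricDist K] (a b d z₁ z₂ : K) (hab : a*b ≠ 0) (had : a ≠ d)
    (hsum : z₁ + z₂ = -d) (hprod : z₁ * z₂ = b)
    (hβ : ‖z₂‖ = ‖z₁‖) (ha : ‖z₁‖ < ‖a‖) :
    ‖a - d‖ = ‖a‖ ∧
    (∃ L : K, HasDerivAt (fun x : K => (a*x^2 + b*x)/(x^2 + d*x + b)) L (a - d) ∧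
      ‖L‖ < 1) ∧
    ∀ x : K, ‖x‖ = ‖a‖ → x ≠ a - d →
      ‖(a*x^2 + b*x)/(x^2 + d*x + b) - (a - d)‖ < ‖x - (a - d)‖ :=
  stmt10_general a b d z₁ z₂ hsum hprod hβ ha
end

section
/- Suppose |a|_p > α = β for f(x)=(ax²+bx)/(x²+dx+b) on ℂ_p. For each k ≥ 0, the set P_k = {x ∈ ℂ_p : f^k(x) ∈ {x̂₁, x̂₂}} is nonempty and is contained in the sphere S_{r_k}(0) with r_k = α·(α/|a|_p)^{(2^k-1)/2^k}. -/
open IsUltrametricDist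

private lemma denomNorm {K : Type*} [NontriviallyNormedField K] [IsUltrametricDist K]
    {b d x : K} {α : ℝ} (hb : ‖b‖ = α^2) (hd : ‖d‖ ≤ α)
    (hx : ‖x‖ < α) : ‖x^2 + d*x + b‖ = α^2 := by
  have h0 : 0 ≤ α := le_trans (norm_nonneg x) hx.le
  have h1 : ‖x^2 + d*x‖ < α^2 := by
    refine lt_of_le_of_lt (norm_add_le_max _ _) (max_lt ?_ ?_)
    · rw [norm_pow]
      exact pow_lt_pow_left₀ hx (norm_nonneg x) (by norm_num)
    · rw [norm_mul]
      have h2 : 0 < α := lt_of_le_of_lt (norm_nonneg x) hx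
      calc ‖d‖ * ‖x‖ ≤ α * ‖x‖ := by gcongr
        _ < α * α := by gcongr
        _ = α^2 := (sq α).symm
  have h2 : ‖x^2 + d*x‖ ≠ ‖b‖ := by rw [hb]; exact ne_of_lt h1
  rw [norm_add_eq_max_of_norm_ne_norm h2, hb, max_eq_right (hb ▸ h1.le)]

private lemma stepNorm {K : Type*} [NontriviallyNormedField K] [IsUltrametricDist K]
    {a b d x y : K} {α : ℝ} (hb : ‖b‖ = α^2) (hd : ‖d‖ ≤ α)
    (h0 : 0 < α) (hA : α < ‖a‖) (hy1 : α^2/‖a‖ < ‖y‖) (hy2 : ‖y‖ ≤ α)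
    (hf : (a*x^2 + b*x)/(x^2 + d*x + b) = y) :
    ‖a‖ * ‖x‖^2 = α^2 * ‖y‖ := by
  have hA0 : (0:ℝ) < ‖a‖ := h0.trans hA
  have hy0 : 0 < ‖y‖ := lt_trans (div_pos (pow_pos h0 2) hA0) hy1
  have hD : x^2 + d*x + b ≠ 0 := by
    intro h
    rw [h, div_zero] at hf
    rw [← hf, norm_zero] at hy0
    exact lt_irrefl 0 hy0
  have hN : a*x^2 + b*x = y * (x^2 + d*x + b) := (div_eq_iff hD).mp hf
  rcases lt_or_ge ‖x‖ α with hxα | hxα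
  · have hDnorm : ‖x^2 + d*x + b‖ = α^2 := denomNorm hb hd hxα
    have hNnorm : ‖a*x^2 + b*x‖ = ‖y‖ * α^2 := by rw [hN, norm_mul, hDnorm]
    rcases le_or_gt ‖x‖ (α^2/‖a‖) with hx2 | hx2
    · exfalso
      have hle : ‖a*x^2 + b*x‖ ≤ ‖x‖ * α^2 := by
        have he : a*x^2 + b*x = x*(a*x+b) := by ring
        rw [he, norm_mul]
        have h1 : ‖a*x + b‖ ≤ α^2 := by
          refine le_trans (norm_add_le_max _ _) (max_le ?_ (le_of_eq hb))
          rw [norm_mul]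
          calc ‖a‖ * ‖x‖ ≤ ‖a‖ * (α^2/‖a‖) := by gcongr
            _ = α^2 := mul_div_cancel₀ _ (ne_of_gt hA0)
        exact mul_le_mul_of_nonneg_left h1 (norm_nonneg x)
      rw [hNnorm] at hle
      have h3 : ‖y‖ ≤ ‖x‖ := le_of_mul_le_mul_right hle (pow_pos h0 2)
      linarith
    · have hax : α^2 < ‖a‖ * ‖x‖ := by
        rw [div_lt_iff₀ hA0] at hx2
        linarith [mul_comm ‖x‖ ‖a‖ ▸ hx2]
      have haxb : ‖a*x + b‖ = ‖a‖ * ‖x‖ := by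
        have hne : ‖a*x‖ ≠ ‖b‖ := by rw [norm_mul, hb]; exact ne_of_gt hax
        rw [norm_add_eq_max_of_norm_ne_norm hne, norm_mul,
          max_eq_left (by rw [hb]; exact hax.le)]
      have he : a*x^2 + b*x = x*(a*x+b) := by ring
      rw [he, norm_mul, haxb] at hNnorm
      linear_combination hNnorm
  · exfalso
    have hx0 : 0 < ‖x‖ := lt_of_lt_of_le h0 hxα
    have h4 : α^2 * ‖x‖ < ‖a‖ * ‖x‖^2 := by
      calc α^2 * ‖x‖ = α * (α * ‖x‖) := by ring
        _ < ‖a‖ * (α * ‖x‖) := mul_lt_mul_of_pos_right hA (mul_pos h0 hx0)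
        _ ≤ ‖a‖ * (‖x‖ * ‖x‖) :=
            mul_le_mul_of_nonneg_left
              (mul_le_mul_of_nonneg_right hxα (norm_nonneg x)) hA0.le
        _ = ‖a‖ * ‖x‖^2 := by ring
    have hb_x : ‖b*x‖ = α^2 * ‖x‖ := by rw [norm_mul, hb]
    have ha_x2 : ‖a*x^2‖ = ‖a‖ * ‖x‖^2 := by rw [norm_mul, norm_pow]
    have hne : ‖a*x^2‖ ≠ ‖b*x‖ := by rw [hb_x, ha_x2]; exact h4.ne'
    have hNnorm : ‖a*x^2 + b*x‖ = ‖a‖ * ‖x‖^2 := by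
      rw [norm_add_eq_max_of_norm_ne_norm hne, hb_x, ha_x2, max_eq_left h4.le]
    have hDnorm : ‖x^2 + d*x + b‖ ≤ ‖x‖^2 := by
      refine le_trans (norm_add_le_max _ _) (max_le (le_trans (norm_add_le_max _ _) (max_le ?_ ?_)) ?_)
      · rw [norm_pow]
      · rw [norm_mul]; nlinarith
      · rw [hb]; nlinarith
    have heq : ‖a‖ * ‖x‖^2 = ‖y‖ * ‖x^2 + d*x + b‖ := by
      rw [← hNnorm, hN, norm_mul]
    have h5 : ‖y‖ * ‖x^2 + d*x + b‖ ≤ α * ‖x‖^2 :=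
      mul_le_mul hy2 hDnorm (norm_nonneg _) h0.le
    have h6 : α * ‖x‖^2 < ‖a‖ * ‖x‖^2 :=
      mul_lt_mul_of_pos_right hA (pow_pos hx0 2)
    linarith

private lemma existsPre {K : Type*} [NontriviallyNormedField K] [IsAlgClosed K]
    [IsUltrametricDist K] {a b d y : K} {α : ℝ} (hb : ‖b‖ = α^2) (hd : ‖d‖ ≤ α)
    (h0 : 0 < α) (hA : α < ‖a‖) (hy : ‖y‖ < ‖a‖) (hb0 : b ≠ 0) :
    ∃ x : K, (a*x^2 + b*x)/(x^2 + d*x + b) = y := by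
  have hA0 : (0:ℝ) < ‖a‖ := h0.trans hA
  have hay : a - y ≠ 0 := by
    intro h
    rw [sub_eq_zero] at h
    rw [h] at hy
    exact lt_irrefl _ hy
  obtain ⟨x, hx⟩ := IsAlgClosed.exists_root
    (Polynomial.C (a-y) * Polynomial.X^2 + Polynomial.C (b - d*y) * Polynomial.X
      + Polynomial.C (-(b*y)))
    (by rw [Polynomial.degree_quadratic hay]; decide)
  have heval : (a-y)*x^2 + (b-d*y)*x + (-(b*y)) = 0 := by
    simpa [Polynomial.IsRoot] using hx
  have key : a*x^2 + b*x = y*(x^2 + d*x + b) := by linear_combination heval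
  have hD : x^2 + d*x + b ≠ 0 := by
    intro hD0
    have h1 : x*(a*x + b) = 0 := by
      have := key
      rw [hD0, mul_zero] at this
      linear_combination this
    rcases mul_eq_zero.mp h1 with h | h
    · rw [h] at hD0
      simp at hD0
      exact hb0 hD0
    · have h2 : ‖a‖ * ‖x‖ = α^2 := by
        have hax : a*x = -b := by linear_combination h
        rw [← norm_mul, hax, norm_neg, hb]
      have hxn : ‖x‖ < α := by nlinarith
      have := denomNorm hb hd hxn
      rw [hD0, norm_zero] at this
      nlinarith
  exact ⟨x, by rw [div_eq_iff hD]; exact key⟩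

/-- Case `|a| > α = β`: for each `k ≥ 0` the set
`P_k = {x : f^[k](x) ∈ {z₁, z₂}}` is nonempty and lies in the sphere of
radius `r_k = α·(α/|a|)^{(2^k-1)/2^k}` about `0`. -/
theorem stmt11 {K : Type*} [NontriviallyNormedField K] [IsAlgClosed K]
    [IsUltrametricDist K] (a b d z₁ z₂ : K) (hab : a*b ≠ 0) (had : a ≠ d)
    (hsum : z₁ + z₂ = -d) (hprod : z₁ * z₂ = b)
    (hβ : ‖z₂‖ = ‖z₁‖) (ha : ‖z₁‖ < ‖a‖) (k : ℕ) :
    {x : K | (fun y : K => (a*y^2 + b*y)/(y^2 + d*y + b))^[k] x = z₁ ∨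
             (fun y : K => (a*y^2 + b*y)/(y^2 + d*y + b))^[k] x = z₂}.Nonempty ∧
    ∀ x : K,
      ((fun y : K => (a*y^2 + b*y)/(y^2 + d*y + b))^[k] x = z₁ ∨
       (fun y : K => (a*y^2 + b*y)/(y^2 + d*y + b))^[k] x = z₂) →
      ‖x‖ = ‖z₁‖ * (‖z₁‖/‖a‖) ^ (((2^k - 1 : ℝ))/(2^k : ℝ)) := by
  set α : ℝ := ‖z₁‖ with hα
  have hb0 : b ≠ 0 := fun h => hab (by rw [h, mul_zero])
  have hz10 : z₁ ≠ 0 := fun h => hb0 (by rw [← hprod, h, zero_mul])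
  have h0 : 0 < α := norm_pos_iff.mpr hz10
  have hA0 : (0:ℝ) < ‖a‖ := h0.trans ha
  have hbn : ‖b‖ = α^2 := by rw [← hprod, norm_mul, hβ, sq]
  have hdn : ‖d‖ ≤ α := by
    have hde : d = -(z₁ + z₂) := by linear_combination hsum
    rw [hde, norm_neg]
    refine le_trans (IsUltrametricDist.norm_add_le_max _ _) ?_
    rw [hβ]
    exact le_of_eq (max_self α)
  set t : ℝ := α / ‖a‖ with htdef
  have ht0 : 0 < t := div_pos h0 hA0
  have ht1 : t < 1 := (div_lt_one hA0).mpr ha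
  have hek0 : ∀ n : ℕ, 0 ≤ ((2:ℝ)^n - 1)/(2:ℝ)^n := fun n => by
    have h1 : (1:ℝ) ≤ 2^n := one_le_pow₀ (by norm_num)
    have h2 : (0:ℝ) < 2^n := by positivity
    exact div_nonneg (by linarith) h2.le
  have hek1 : ∀ n : ℕ, ((2:ℝ)^n - 1)/(2:ℝ)^n < 1 := fun n => by
    have h2 : (0:ℝ) < 2^n := by positivity
    rw [div_lt_one h2]
    linarith
  set r : ℕ → ℝ := fun n => α * t ^ (((2:ℝ)^n - 1)/(2:ℝ)^n) with hrdef
  have hrle : ∀ n, r n ≤ α := fun n => by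
    have := Real.rpow_le_one ht0.le ht1.le (hek0 n)
    calc r n = α * t ^ (((2:ℝ)^n - 1)/(2:ℝ)^n) := rfl
      _ ≤ α * 1 := mul_le_mul_of_nonneg_left this h0.le
      _ = α := mul_one α
  have hrgt : ∀ n, α^2/‖a‖ < r n := fun n => by
    have h1 : t ^ (1:ℝ) < t ^ (((2:ℝ)^n - 1)/(2:ℝ)^n) :=
      Real.rpow_lt_rpow_of_exponent_gt ht0 ht1 (hek1 n)
    rw [Real.rpow_one] at h1
    have h2 : α^2/‖a‖ = α * t := by rw [htdef]; ring
    rw [h2]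
    exact mul_lt_mul_of_pos_left h1 h0
  induction k with
  | zero =>
    constructor
    · exact ⟨z₁, Or.inl rfl⟩
    · intro x hx
      have he : ((2:ℝ)^(0:ℕ) - 1)/(2:ℝ)^(0:ℕ) = 0 := by norm_num
      have hx' : ‖x‖ = α := by
        rcases hx with h | h
        · rw [Function.iterate_zero_apply] at h; rw [h]
        · rw [Function.iterate_zero_apply] at h; rw [h]; exact hβ
      rw [hx', he, Real.rpow_zero, mul_one]
  | succ k ih =>
    obtain ⟨⟨x₀, hx₀⟩, hnorm⟩ := ih
    have hx₀n : ‖x₀‖ = r k := hnorm x₀ hx₀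
    constructor
    · have hx₀A : ‖x₀‖ < ‖a‖ := lt_of_le_of_lt (hx₀n ▸ hrle k) ha
      obtain ⟨x, hx⟩ := existsPre hbn hdn h0 ha hx₀A hb0
      refine ⟨x, ?_⟩
      rw [Set.mem_setOf_eq, Function.iterate_succ_apply, hx]
      exact hx₀
    · intro x hx
      rw [Function.iterate_succ_apply] at hx
      have hyn : ‖(a*x^2 + b*x)/(x^2 + d*x + b)‖ = r k := hnorm _ hx
      have hy1 : α^2/‖a‖ < ‖(a*x^2 + b*x)/(x^2 + d*x + b)‖ := hyn ▸ hrgt k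
      have hy2 : ‖(a*x^2 + b*x)/(x^2 + d*x + b)‖ ≤ α := hyn ▸ hrle k
      have hstep : ‖a‖ * ‖x‖^2 = α^2 * ‖(a*x^2 + b*x)/(x^2 + d*x + b)‖ :=
        stepNorm hbn hdn h0 ha hy1 hy2 rfl
      have hexp : (((2:ℝ)^(k+1) - 1)/(2:ℝ)^(k+1)) + (((2:ℝ)^(k+1) - 1)/(2:ℝ)^(k+1))
          = 1 + ((2:ℝ)^k - 1)/(2:ℝ)^k := by
        have h2k : (2:ℝ)^k ≠ 0 := by positivity
        field_simp
        ring
      have hsq : (r (k+1))^2 = α^2/‖a‖ * r k := by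
        have : (t ^ (((2:ℝ)^(k+1) - 1)/(2:ℝ)^(k+1)))^2
            = t * t ^ (((2:ℝ)^k - 1)/(2:ℝ)^k) := by
          rw [sq, ← Real.rpow_add ht0, hexp, Real.rpow_add ht0, Real.rpow_one]
        calc (r (k+1))^2 = α^2 * (t ^ (((2:ℝ)^(k+1) - 1)/(2:ℝ)^(k+1)))^2 := by
              rw [hrdef]; ring
          _ = α^2 * (t * t ^ (((2:ℝ)^k - 1)/(2:ℝ)^k)) := by rw [this]
          _ = α^2/‖a‖ * r k := by rw [hrdef, htdef]; ring
      have hxsq : ‖x‖^2 = (r (k+1))^2 := by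
        rw [hsq, ← hyn, div_mul_eq_mul_div, eq_div_iff (ne_of_gt hA0)]
        linear_combination hstep
      have hrpos : 0 ≤ r (k+1) := by
        have := hrgt (k+1)
        have h2 : 0 < α^2/‖a‖ := div_pos (pow_pos h0 2) hA0
        linarith
      calc ‖x‖ = Real.sqrt (‖x‖^2) := (Real.sqrt_sq (norm_nonneg x)).symm
        _ = Real.sqrt ((r (k+1))^2) := by rw [hxsq]
        _ = r (k+1) := Real.sqrt_sq hrpos
end

section
/- Suppose |a|_p < α < β for f(x)=(ax²+bx)/(x²+dx+b) on ℂ_p. Then the fixed point x₂ = a-d satisfies |x₂|_p = β and |f'(x₂)|_p = β/α > 1, so x₂ is repelling. -/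
/-!
At `x₀ = a - d` the denominator of `f` equals `a x₀ + b`, so `f x₀ = x₀`, and the quotient rule
gives `f'(x₀) = (x₀ d + b) / (a x₀ + b)`. Since `z₁ + z₂ = -d`, `z₁ z₂ = b` and `‖z₁‖ < ‖z₂‖`, the
ultrametric inequality gives `‖d‖ = ‖x₀‖ = β` and `‖b‖ = αβ`; in both sums of the fraction one term
strictly dominates (`‖x₀ d‖ = β² > αβ` and `‖a x₀‖ < αβ`), so `‖f'(x₀)‖ = β² / (αβ) = β / α`.
-/

lemma IsUltrametricDist.norm_add_eq_right_of_norm_lt {G : Type*} [SeminormedAddGroup G]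
    [IsUltrametricDist G] {x y : G} (h : ‖x‖ < ‖y‖) : ‖x + y‖ = ‖y‖ := by
  rw [norm_add_eq_max_of_norm_ne_norm h.ne, max_eq_right h.le]

lemma IsUltrametricDist.norm_sub_eq_right_of_norm_lt {G : Type*} [SeminormedAddGroup G]
    [IsUltrametricDist G] {x y : G} (h : ‖x‖ < ‖y‖) : ‖x - y‖ = ‖y‖ := by
  rw [sub_eq_add_neg, norm_add_eq_right_of_norm_lt (by rwa [norm_neg]), norm_neg]

section QuadraticRatio

variable {𝕜 : Type*} [NontriviallyNormedField 𝕜] (a b d : 𝕜)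

lemma hasDerivAt_quadratic_div_quadratic {x : 𝕜} (hx : x ^ 2 + d * x + b ≠ 0) :
    HasDerivAt (fun x : 𝕜 => (a * x ^ 2 + b * x) / (x ^ 2 + d * x + b))
      (((a * d - b) * x ^ 2 + 2 * a * b * x + b ^ 2) / (x ^ 2 + d * x + b) ^ 2) x := by
  have hnum : HasDerivAt (fun x : 𝕜 => a * x ^ 2 + b * x) (2 * a * x + b) x :=
    (((hasDerivAt_pow 2 x).const_mul a).add ((hasDerivAt_id' x).const_mul b)).congr_deriv
      (by push_cast; ring)
  have hden : HasDerivAt (fun x : 𝕜 => x ^ 2 + d * x + b) (2 * x + d) x :=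
    (((hasDerivAt_pow 2 x).add ((hasDerivAt_id' x).const_mul d)).add_const b).congr_deriv
      (by push_cast; ring)
  exact (hnum.div hden hx).congr_deriv (by ring)

lemma hasDerivAt_quadratic_div_quadratic_at_sub (hD : a * (a - d) + b ≠ 0) :
    HasDerivAt (fun x : 𝕜 => (a * x ^ 2 + b * x) / (x ^ 2 + d * x + b))
      (((a - d) * d + b) / (a * (a - d) + b)) (a - d) := by
  have hden : (a - d) ^ 2 + d * (a - d) + b = a * (a - d) + b := by ring
  refine (hasDerivAt_quadratic_div_quadratic a b d (hden ▸ hD)).congr_deriv ?_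
  rw [hden, div_eq_div_iff (pow_ne_zero 2 hD) hD]
  ring

end QuadraticRatio

open IsUltrametricDist in
theorem stmt12_general {K : Type*} [NontriviallyNormedField K]
    [IsUltrametricDist K] (a b d z₁ z₂ : K)
    (hsum : z₁ + z₂ = -d) (hprod : z₁ * z₂ = b)
    (ha : ‖a‖ < ‖z₁‖) (hαβ : ‖z₁‖ < ‖z₂‖) :
    ‖a - d‖ = ‖z₂‖ ∧
    (∃ L : K, HasDerivAt (fun x : K => (a*x^2 + b*x)/(x^2 + d*x + b)) L (a - d) ∧
      ‖L‖ = ‖z₂‖/‖z₁‖) ∧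
    1 < ‖z₂‖/‖z₁‖ := by
  have hα : 0 < ‖z₁‖ := (norm_nonneg a).trans_lt ha
  have hβ : 0 < ‖z₂‖ := hα.trans hαβ
  have hd : ‖d‖ = ‖z₂‖ := by
    rw [← norm_neg, ← hsum, norm_add_eq_right_of_norm_lt hαβ]
  have hb : ‖b‖ = ‖z₁‖ * ‖z₂‖ := by rw [← hprod, norm_mul]
  have hx₀ : ‖a - d‖ = ‖z₂‖ := by
    rw [norm_sub_eq_right_of_norm_lt (hd ▸ ha.trans hαβ), hd]
  have hD : ‖a * (a - d) + b‖ = ‖z₁‖ * ‖z₂‖ := by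
    have haD : ‖a * (a - d)‖ < ‖b‖ := by
      rw [norm_mul, hx₀, hb]
      exact mul_lt_mul_of_pos_right ha hβ
    rw [norm_add_eq_right_of_norm_lt haD, hb]
  have hN : ‖(a - d) * d + b‖ = ‖z₂‖ * ‖z₂‖ := by
    have hbN : ‖b‖ < ‖(a - d) * d‖ := by
      rw [norm_mul, hx₀, hd, hb]
      exact mul_lt_mul_of_pos_right hαβ hβ
    rw [add_comm, norm_add_eq_right_of_norm_lt hbN, norm_mul, hx₀, hd]
  have hD₀ : a * (a - d) + b ≠ 0 := norm_pos_iff.mp (hD ▸ mul_pos hα hβ)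
  refine ⟨hx₀, ⟨_, hasDerivAt_quadratic_div_quadratic_at_sub a b d hD₀, ?_⟩,
    (one_lt_div hα).mpr hαβ⟩
  rw [norm_div, hN, hD]
  field_simp

/-- Case `|a| < α < β`: the fixed point `x₂ = a - d` satisfies `|x₂| = β`
and `|f'(x₂)| = β/α > 1`, so `x₂` is repelling. -/
theorem stmt12 {K : Type*} [NontriviallyNormedField K] [IsAlgClosed K]
    [IsUltrametricDist K] (a b d z₁ z₂ : K) (hab : a*b ≠ 0) (had : a ≠ d)
    (hsum : z₁ + z₂ = -d) (hprod : z₁ * z₂ = b)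
    (ha : ‖a‖ < ‖z₁‖) (hαβ : ‖z₁‖ < ‖z₂‖) :
    ‖a - d‖ = ‖z₂‖ ∧
    (∃ L : K, HasDerivAt (fun x : K => (a*x^2 + b*x)/(x^2 + d*x + b)) L (a - d) ∧
      ‖L‖ = ‖z₂‖/‖z₁‖) ∧
    1 < ‖z₂‖/‖z₁‖ :=
  stmt12_general a b d z₁ z₂ hsum hprod ha hαβ
end

section
/- Suppose |a|_p < α < β for f(x)=(ax²+bx)/(x²+dx+b) on ℂ_p. If α < |x|_p < β, then |f(x)|_p = α. If β < |x|_p < αβ/|a|_p then |f(x)|_p = αβ/|x|_p, and if |x|_p > αβ/|a|_p then |f(x)|_p = |a|_p. -/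
/-!
Write the denominator as `(x - z₁)(x - z₂)` and the numerator as `x (a x + b)`, where
`‖b‖ = ‖z₁‖ ‖z₂‖`. In each of the three ranges of `‖x‖` the two terms of each binomial
`x - z₁`, `x - z₂`, `a x + b` have different norms, so by the strong triangle inequality each
binomial has the norm of its dominant term, and the three formulas are what is left after
cancelling.
-/

open IsUltrametricDist

lemma norm_sub_eq_max_of_norm_ne_norm {E : Type*} [SeminormedAddCommGroup E]
    [IsUltrametricDist E] {x y : E} (h : ‖x‖ ≠ ‖y‖) : ‖x - y‖ = max ‖x‖ ‖y‖ := by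
  rw [sub_eq_add_neg, norm_add_eq_max_of_norm_ne_norm (by rwa [norm_neg]), norm_neg]

section

variable {K : Type*} [NormedField K]

lemma norm_div_quadratic_eq_of_roots {a b d z₁ z₂ : K} (hsum : z₁ + z₂ = -d)
    (hprod : z₁ * z₂ = b) (x : K) :
    ‖(a*x^2 + b*x)/(x^2 + d*x + b)‖ = ‖x‖ * ‖a*x + b‖ / (‖x - z₁‖ * ‖x - z₂‖) := by
  have hd : d = -(z₁ + z₂) := by rw [hsum, neg_neg]
  rw [show a*x^2 + b*x = x * (a*x + b) by ring,
    show x^2 + d*x + b = (x - z₁) * (x - z₂) by rw [hd, ← hprod]; ring,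
    norm_div, norm_mul, norm_mul]

variable [IsUltrametricDist K]

lemma norm_div_quadratic_eq_max_of_roots {a b d z₁ z₂ x : K} (hsum : z₁ + z₂ = -d)
    (hprod : z₁ * z₂ = b) (h₁ : ‖x‖ ≠ ‖z₁‖) (h₂ : ‖x‖ ≠ ‖z₂‖)
    (hax : ‖a‖ * ‖x‖ ≠ ‖z₁‖ * ‖z₂‖) :
    ‖(a*x^2 + b*x)/(x^2 + d*x + b)‖ =
      ‖x‖ * max (‖a‖ * ‖x‖) (‖z₁‖ * ‖z₂‖) / (max ‖x‖ ‖z₁‖ * max ‖x‖ ‖z₂‖) := by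
  have hb : ‖b‖ = ‖z₁‖ * ‖z₂‖ := by rw [← hprod, norm_mul]
  rw [norm_div_quadratic_eq_of_roots hsum hprod, norm_sub_eq_max_of_norm_ne_norm h₁,
    norm_sub_eq_max_of_norm_ne_norm h₂,
    norm_add_eq_max_of_norm_ne_norm (by rwa [norm_mul, hb]), norm_mul, hb]

end

theorem stmt13_general {K : Type*} [NontriviallyNormedField K]
    [IsUltrametricDist K] (a b d z₁ z₂ : K) (hab : a*b ≠ 0)
    (hsum : z₁ + z₂ = -d) (hprod : z₁ * z₂ = b)
    (ha : ‖a‖ < ‖z₁‖) (hαβ : ‖z₁‖ < ‖z₂‖) :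
    ∀ x : K,
      (‖z₁‖ < ‖x‖ → ‖x‖ < ‖z₂‖ →
        ‖(a*x^2 + b*x)/(x^2 + d*x + b)‖ = ‖z₁‖) ∧
      (‖z₂‖ < ‖x‖ → ‖x‖ < ‖z₁‖*‖z₂‖/‖a‖ →
        ‖(a*x^2 + b*x)/(x^2 + d*x + b)‖ = ‖z₁‖*‖z₂‖/‖x‖) ∧
      (‖z₁‖*‖z₂‖/‖a‖ < ‖x‖ →
        ‖(a*x^2 + b*x)/(x^2 + d*x + b)‖ = ‖a‖) := by
  have ha₀ : 0 < ‖a‖ := norm_pos_iff.mpr (left_ne_zero_of_mul hab)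
  have hz₂ : ‖z₂‖ < ‖z₁‖ * ‖z₂‖ / ‖a‖ := by
    rw [lt_div_iff₀ ha₀]; nlinarith
  have hz₁ : 0 < ‖z₁‖ := ha₀.trans ha
  intro x
  refine ⟨fun h₁ h₂ => ?_, fun h₁ h₂ => ?_, fun h => ?_⟩
  · have hax : ‖a‖ * ‖x‖ < ‖z₁‖ * ‖z₂‖ := by nlinarith
    rw [norm_div_quadratic_eq_max_of_roots hsum hprod h₁.ne' h₂.ne hax.ne, max_eq_right hax.le,
      max_eq_left h₁.le, max_eq_right h₂.le]
    field_simp [(hz₁.trans h₁).ne', (hz₁.trans hαβ).ne']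
  · have hax : ‖a‖ * ‖x‖ < ‖z₁‖ * ‖z₂‖ := by rw [lt_div_iff₀ ha₀] at h₂; linarith
    have h₁' := hαβ.trans h₁
    rw [norm_div_quadratic_eq_max_of_roots hsum hprod h₁'.ne' h₁.ne' hax.ne, max_eq_right hax.le,
      max_eq_left h₁'.le, max_eq_left h₁.le]
    field_simp [(hz₁.trans h₁').ne']
  · have hax : ‖z₁‖ * ‖z₂‖ < ‖a‖ * ‖x‖ := by rw [div_lt_iff₀ ha₀] at h; linarith
    have h₂ := hz₂.trans h
    have h₁ := hαβ.trans h₂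
    rw [norm_div_quadratic_eq_max_of_roots hsum hprod h₁.ne' h₂.ne' hax.ne', max_eq_left hax.le,
      max_eq_left h₁.le, max_eq_left h₂.le]
    field_simp [(hz₁.trans h₁).ne']

/-- Case `|a| < α < β`: if `α < |x| < β` then `|f(x)| = α`; if
`β < |x| < αβ/|a|` then `|f(x)| = αβ/|x|`; if `|x| > αβ/|a|` then
`|f(x)| = |a|`. -/
theorem stmt13 {K : Type*} [NontriviallyNormedField K] [IsAlgClosed K]
    [IsUltrametricDist K] (a b d z₁ z₂ : K) (hab : a*b ≠ 0) (had : a ≠ d)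
    (hsum : z₁ + z₂ = -d) (hprod : z₁ * z₂ = b)
    (ha : ‖a‖ < ‖z₁‖) (hαβ : ‖z₁‖ < ‖z₂‖) :
    ∀ x : K,
      (‖z₁‖ < ‖x‖ → ‖x‖ < ‖z₂‖ →
        ‖(a*x^2 + b*x)/(x^2 + d*x + b)‖ = ‖z₁‖) ∧
      (‖z₂‖ < ‖x‖ → ‖x‖ < ‖z₁‖*‖z₂‖/‖a‖ →
        ‖(a*x^2 + b*x)/(x^2 + d*x + b)‖ = ‖z₁‖*‖z₂‖/‖x‖) ∧
      (‖z₁‖*‖z₂‖/‖a‖ < ‖x‖ →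
        ‖(a*x^2 + b*x)/(x^2 + d*x + b)‖ = ‖a‖) :=
  stmt13_general a b d z₁ z₂ hab hsum hprod ha hαβ
end

section
/- Suppose α < β < |a|_p for f(x)=(ax²+bx)/(x²+dx+b) on ℂ_p. Then for |x|_p < αβ/|a|_p one has |f(x)|_p = |x|_p, and the fixed point x₂=a-d lies on S_{|a|_p}(0) with |f'(x₂)|_p = β/|a|_p < 1 (x₂ attracting). -/
open IsUltrametricDist in
private lemma add_norm_lt {K : Type*} [NormedField K] [IsUltrametricDist K]
    {x y : K} (h : ‖x‖ < ‖y‖) : ‖x + y‖ = ‖y‖ := by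
  rw [norm_add_eq_max_of_norm_ne_norm h.ne, max_eq_right h.le]

/-- Case `α < β < |a|`: for `|x| < αβ/|a|` one has `|f(x)| = |x|`; the fixed
point `x₂ = a - d` lies on the sphere `S_{|a|}(0)` and `|f'(x₂)| = β/|a| < 1`,
so `x₂` is attracting. -/
theorem stmt15 {K : Type*} [NontriviallyNormedField K] [IsAlgClosed K]
    [IsUltrametricDist K] (a b d z₁ z₂ : K) (hab : a*b ≠ 0) (had : a ≠ d)
    (hsum : z₁ + z₂ = -d) (hprod : z₁ * z₂ = b)
    (hαβ : ‖z₁‖ < ‖z₂‖) (hβa : ‖z₂‖ < ‖a‖) :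
    (∀ x : K, ‖x‖ < ‖z₁‖*‖z₂‖/‖a‖ →
      ‖(a*x^2 + b*x)/(x^2 + d*x + b)‖ = ‖x‖) ∧
    ‖a - d‖ = ‖a‖ ∧
    (∃ L : K, HasDerivAt (fun x : K => (a*x^2 + b*x)/(x^2 + d*x + b)) L (a - d) ∧
      ‖L‖ = ‖z₂‖/‖a‖) ∧
    ‖z₂‖/‖a‖ < 1 := by
  have ha0 : a ≠ 0 := fun h => hab (by simp [h])
  have hb0 : b ≠ 0 := fun h => hab (by simp [h])
  have hz1 : z₁ ≠ 0 := fun h => hb0 (by rw [← hprod, h, zero_mul])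
  have hz1p : (0:ℝ) < ‖z₁‖ := norm_pos_iff.mpr hz1
  have hz2p : (0:ℝ) < ‖z₂‖ := hz1p.trans hαβ
  have hap : (0:ℝ) < ‖a‖ := hz2p.trans hβa
  have hbnorm : ‖b‖ = ‖z₁‖ * ‖z₂‖ := by rw [← hprod, norm_mul]
  have hdnorm : ‖d‖ = ‖z₂‖ := by
    have : ‖-d‖ = ‖z₂‖ := by rw [← hsum, add_norm_lt hαβ]
    simpa using this
  -- norm of a - d
  have had2 : ‖a - d‖ = ‖a‖ := by
    have : ‖-d + a‖ = ‖a‖ := add_norm_lt (by rwa [norm_neg, hdnorm])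
    rw [← this]; ring_nf
  have hba : ‖z₂‖ / ‖a‖ < 1 := (div_lt_one hap).mpr hβa
  refine ⟨?_, had2, ?_, hba⟩
  · intro x hx
    rcases eq_or_ne x 0 with rfl | hx0
    · simp
    have hxp : (0:ℝ) < ‖x‖ := norm_pos_iff.mpr hx0
    have hxα : ‖x‖ < ‖z₁‖ := by
      calc ‖x‖ < ‖z₁‖ * ‖z₂‖ / ‖a‖ := hx
        _ < ‖z₁‖ := by
          rw [div_lt_iff₀ hap]
          exact mul_lt_mul_of_pos_left hβa hz1p
    have hnum : ‖a*x^2 + b*x‖ = ‖b‖ * ‖x‖ := by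
      have h1 : ‖a*x^2‖ < ‖b*x‖ := by
        rw [norm_mul, norm_mul, norm_pow, sq]
        rw [← mul_assoc]
        apply mul_lt_mul_of_pos_right _ hxp
        calc ‖a‖ * ‖x‖ < ‖a‖ * (‖z₁‖ * ‖z₂‖ / ‖a‖) :=
              mul_lt_mul_of_pos_left hx hap
          _ = ‖z₁‖ * ‖z₂‖ := by field_simp
          _ = ‖b‖ := hbnorm.symm
      rw [add_norm_lt h1, norm_mul]
    have hden : ‖x^2 + d*x + b‖ = ‖b‖ := by
      apply add_norm_lt
      have h2 : ‖x^2‖ < ‖b‖ := by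
        rw [norm_pow, hbnorm, sq]
        exact mul_lt_mul'' hxα (hxα.trans hαβ) hxp.le hxp.le
      have h3 : ‖d*x‖ < ‖b‖ := by
        rw [norm_mul, hdnorm, hbnorm, mul_comm ‖z₂‖]
        exact mul_lt_mul_of_pos_right hxα hz2p
      calc ‖x^2 + d*x‖ ≤ max ‖x^2‖ ‖d*x‖ := IsUltrametricDist.norm_add_le_max _ _
        _ < ‖b‖ := max_lt h2 h3
    have hbn : ‖b‖ ≠ 0 := norm_ne_zero_iff.mpr hb0
    rw [norm_div, hnum, hden, mul_comm, mul_div_assoc, div_self hbn, mul_one]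
  · -- derivative at a - d
    set x₂ := a - d with hx₂
    have hD0eq : x₂^2 + d*x₂ + b = a*(a-d) + b := by rw [hx₂]; ring
    have hD0norm : ‖x₂^2 + d*x₂ + b‖ = ‖a‖ * ‖a‖ := by
      rw [hD0eq]
      have hlt : ‖b‖ < ‖a*(a-d)‖ := by
        rw [norm_mul, had2, hbnorm]
        exact mul_lt_mul'' (hαβ.trans hβa) hβa (norm_nonneg _) (norm_nonneg _)
      rw [add_comm, add_norm_lt hlt, norm_mul, had2]
    have hD0 : x₂^2 + d*x₂ + b ≠ 0 := by
      intro h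
      rw [h, norm_zero] at hD0norm
      exact absurd hD0norm.symm (by positivity)
    have hN : HasDerivAt (fun x : K => a*x^2 + b*x) (a*(2*x₂) + b) x₂ := by
      have h1 : HasDerivAt (fun x : K => x^2) (2*x₂) x₂ := by
        simpa using hasDerivAt_pow 2 x₂
      exact (h1.const_mul a).add (by simpa using (hasDerivAt_id x₂).const_mul b)
    have hD : HasDerivAt (fun x : K => x^2 + d*x + b) (2*x₂ + d) x₂ := by
      have h1 : HasDerivAt (fun x : K => x^2) (2*x₂) x₂ := by
        simpa using hasDerivAt_pow 2 x₂
      exact ((h1.add (by simpa using (hasDerivAt_id x₂).const_mul d)).add_const b)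
    have hder := hN.div hD hD0
    refine ⟨_, hder, ?_⟩
    have hLval : ((a*(2*x₂) + b) * (x₂^2 + d*x₂ + b) - (a*x₂^2 + b*x₂) * (2*x₂ + d))
        / (x₂^2 + d*x₂ + b)^2 = (d*(a-d) + b) / (x₂^2 + d*x₂ + b) := by
      rw [div_eq_div_iff (pow_ne_zero 2 hD0) hD0]
      rw [hx₂]; ring
    rw [hLval, norm_div, hD0norm]
    have hnum2 : ‖d*(a-d) + b‖ = ‖z₂‖ * ‖a‖ := by
      have hlt : ‖b‖ < ‖d*(a-d)‖ := by
        rw [norm_mul, had2, hdnorm, hbnorm, mul_comm ‖z₁‖]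
        exact mul_lt_mul_of_pos_left (hαβ.trans hβa) hz2p
      rw [add_comm, add_norm_lt hlt, norm_mul, had2, hdnorm]
    rw [hnum2, mul_comm ‖a‖, mul_div_mul_right _ _ hap.ne']
end

section
/- Let r ∈ I (the set of invariant radii) and x ∈ S_r(0). Then |f'(x)|_p = 1, where f'(x) = (adx² - bx² + 2abx + b²)/((x²+dx+b)²). -/
section Aux
variable {K : Type*} [NontriviallyNormedField K] [IsUltrametricDist K]

lemma add_dom17 {u v : K} (h : ‖u‖ < ‖v‖) : ‖u + v‖ = ‖v‖ := by
  rw [IsUltrametricDist.norm_add_eq_max_of_norm_ne_norm h.ne, max_eq_right h.le]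

lemma sub_dom17 {u v : K} (h : ‖u‖ < ‖v‖) : ‖u - v‖ = ‖v‖ := by
  rw [sub_eq_add_neg, add_dom17 (by simpa using h), norm_neg]

lemma norm_sub_le_max17 (u v : K) : ‖u - v‖ ≤ max ‖u‖ ‖v‖ := by
  have := IsUltrametricDist.norm_add_le_max u (-v)
  rwa [← sub_eq_add_neg, norm_neg] at this

lemma two_mul_le17 (u : K) : ‖2 * u‖ ≤ ‖u‖ := by
  rw [norm_mul]
  calc ‖(2:K)‖ * ‖u‖ ≤ 1 * ‖u‖ := by
        gcongr; exact_mod_cast IsUltrametricDist.norm_natCast_le_one K 2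
    _ = ‖u‖ := one_mul _

set_option linter.unusedSectionVars false in
lemma norm_den17 (b d z₁ z₂ x : K) (hsum : z₁ + z₂ = -d) (hprod : z₁ * z₂ = b) :
    ‖x^2 + d*x + b‖ = ‖x - z₁‖ * ‖x - z₂‖ := by
  have hfac : x^2 + d*x + b = (x - z₁)*(x - z₂) := by linear_combination x * hsum - hprod
  rw [hfac, norm_mul]

/-- Case `‖x‖ < ‖z₁‖`. -/
lemma caseA17 (a b d z₁ z₂ x : K) (hsum : z₁ + z₂ = -d) (hprod : z₁ * z₂ = b)
    (hb : b ≠ 0) (hαβ : ‖z₁‖ ≤ ‖z₂‖) (hx1 : ‖x‖ < ‖z₁‖)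
    (h1 : ‖a*d - b‖ * ‖x‖^2 < ‖b‖^2) (h2 : ‖a‖ * ‖b‖ * ‖x‖ < ‖b‖^2) :
    ‖(a*d*x^2 - b*x^2 + 2*a*b*x + b^2)/((x^2 + d*x + b)^2)‖ = 1 := by
  have hbn : ‖b‖ = ‖z₁‖ * ‖z₂‖ := by rw [← hprod, norm_mul]
  have hb0 : (0:ℝ) < ‖b‖ := norm_pos_iff.mpr hb
  have hx2 : ‖x‖ < ‖z₂‖ := hx1.trans_le hαβ
  have hN : a*d*x^2 - b*x^2 + 2*a*b*x + b^2 = (a*d - b)*x^2 + (2*a*b*x + b^2) := by ring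
  have h2' : ‖2*a*b*x‖ < ‖b^2‖ := by
    rw [norm_pow]
    calc ‖2*a*b*x‖ = ‖2*(a*b*x)‖ := by ring_nf
      _ ≤ ‖a*b*x‖ := two_mul_le17 _
      _ = ‖a‖ * ‖b‖ * ‖x‖ := by rw [norm_mul, norm_mul]
      _ < ‖b‖^2 := h2
  have hinner : ‖2*a*b*x + b^2‖ = ‖b^2‖ := add_dom17 h2'
  have h1' : ‖(a*d - b)*x^2‖ < ‖2*a*b*x + b^2‖ := by
    rw [hinner, norm_mul, norm_pow, norm_pow]; exact h1
  have hNn : ‖a*d*x^2 - b*x^2 + 2*a*b*x + b^2‖ = ‖b‖^2 := by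
    rw [hN, add_dom17 h1', hinner, norm_pow]
  have hD : ‖(x^2 + d*x + b)^2‖ = ‖b‖^2 := by
    rw [norm_pow, norm_den17 b d z₁ z₂ x hsum hprod, sub_dom17 hx1, sub_dom17 hx2, hbn]
  rw [norm_div, hNn, hD, div_self (by positivity)]

/-- Case `‖z₁‖ < ‖x‖ < ‖z₂‖`, with `‖a‖ = ‖z₂‖`. -/
lemma caseB17 (a b d z₁ z₂ x : K) (hsum : z₁ + z₂ = -d) (hprod : z₁ * z₂ = b)
    (hb : b ≠ 0) (ha : ‖a‖ = ‖z₂‖) (hx1 : ‖z₁‖ < ‖x‖) (hx2 : ‖x‖ < ‖z₂‖) :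
    ‖(a*d*x^2 - b*x^2 + 2*a*b*x + b^2)/((x^2 + d*x + b)^2)‖ = 1 := by
  have hbn : ‖b‖ = ‖z₁‖ * ‖z₂‖ := by rw [← hprod, norm_mul]
  have hb0 : (0:ℝ) < ‖b‖ := norm_pos_iff.mpr hb
  have hz1 : (0:ℝ) ≤ ‖z₁‖ := norm_nonneg _
  have hx0 : (0:ℝ) < ‖x‖ := hz1.trans_lt hx1
  have hz2 : (0:ℝ) < ‖z₂‖ := hx0.trans hx2
  have h12 : ‖z₁‖ < ‖z₂‖ := hx1.trans hx2
  have hd : ‖d‖ = ‖z₂‖ := by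
    have h : ‖d‖ = ‖z₁ + z₂‖ := by rw [hsum, norm_neg]
    rw [h, add_dom17 h12]
  have hadb : ‖a*d - b‖ = ‖z₂‖^2 := by
    have hlt : ‖b‖ < ‖a*d‖ := by
      rw [norm_mul, ha, hd, hbn]
      nlinarith [mul_lt_mul_of_pos_right h12 hz2]
    rw [norm_sub_rev, sub_dom17 hlt, norm_mul, ha, hd, sq]
  have hlead : ‖(a*d - b)*x^2‖ = ‖z₂‖^2 * ‖x‖^2 := by
    rw [norm_mul, hadb, norm_pow]
  have hN : a*d*x^2 - b*x^2 + 2*a*b*x + b^2 = (2*a*b*x + b^2) + (a*d - b)*x^2 := by ring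
  have hb2lt : ‖b^2‖ < ‖(a*d - b)*x^2‖ := by
    rw [hlead, norm_pow, hbn]
    nlinarith [mul_lt_mul'' hx1 hx1 hz1 hz1, mul_pos hz2 hz2]
  have habx : ‖2*a*b*x‖ < ‖(a*d - b)*x^2‖ := by
    rw [hlead]
    calc ‖2*a*b*x‖ = ‖2*(a*b*x)‖ := by ring_nf
      _ ≤ ‖a*b*x‖ := two_mul_le17 _
      _ = ‖a‖ * ‖b‖ * ‖x‖ := by rw [norm_mul, norm_mul]
      _ < ‖z₂‖^2 * ‖x‖^2 := by
          rw [ha, hbn]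
          nlinarith [mul_lt_mul_of_pos_left hx1 (mul_pos (mul_pos hz2 hz2) hx0)]
  have hinner : ‖2*a*b*x + b^2‖ < ‖(a*d - b)*x^2‖ :=
    (IsUltrametricDist.norm_add_le_max _ _).trans_lt (max_lt habx hb2lt)
  have hNn : ‖a*d*x^2 - b*x^2 + 2*a*b*x + b^2‖ = ‖z₂‖^2 * ‖x‖^2 := by
    rw [hN, add_dom17 hinner, hlead]
  have hxz1 : ‖x - z₁‖ = ‖x‖ := by rw [norm_sub_rev, sub_dom17 hx1]
  have hD : ‖(x^2 + d*x + b)^2‖ = (‖x‖ * ‖z₂‖)^2 := by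
    rw [norm_pow, norm_den17 b d z₁ z₂ x hsum hprod, hxz1, sub_dom17 hx2]
  rw [norm_div, hNn, hD, mul_pow,
    show ‖z₂‖^2 * ‖x‖^2 = ‖x‖^2 * ‖z₂‖^2 by ring,
    div_self (mul_pos (pow_pos hx0 2) (pow_pos hz2 2)).ne']

end Aux

/-- For `r` in the set `I` of invariant radii and `x ∈ S_r(0)`,
`|f'(x)| = 1`, where
`f'(x) = (adx² - bx² + 2abx + b²)/((x²+dx+b)²)`. -/
theorem stmt17 {K : Type*} [NontriviallyNormedField K] [IsAlgClosed K]
    [IsUltrametricDist K] (a b d z₁ z₂ : K) (hab : a*b ≠ 0) (had : a ≠ d)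
    (hsum : z₁ + z₂ = -d) (hprod : z₁ * z₂ = b) (hαβ : ‖z₁‖ ≤ ‖z₂‖)
    (r : ℝ)
    (hr : r ∈ (if ‖a‖ < ‖z₂‖ then Set.Ioo (0:ℝ) ‖z₁‖
      else if ‖a‖ = ‖z₂‖ then Set.Ioo (0:ℝ) ‖z₁‖ ∪ Set.Ioo ‖z₁‖ ‖z₂‖
      else Set.Ioo (0:ℝ) (‖z₁‖*‖z₂‖/‖a‖))) :
    ∀ x : K, ‖x‖ = r →
      ‖(a*d*x^2 - b*x^2 + 2*a*b*x + b^2)/((x^2 + d*x + b)^2)‖ = 1 := by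
  have hb : b ≠ 0 := fun h => hab (by rw [h, mul_zero])
  have hb0 : (0:ℝ) < ‖b‖ := norm_pos_iff.mpr hb
  have hbn : ‖b‖ = ‖z₁‖ * ‖z₂‖ := by rw [← hprod, norm_mul]
  have hz1 : (0:ℝ) < ‖z₁‖ := by
    rcases lt_or_eq_of_le (norm_nonneg z₁) with h | h
    · exact h
    · exfalso; rw [hbn, ← h, zero_mul] at hb0; exact lt_irrefl 0 hb0
  have hz2 : (0:ℝ) < ‖z₂‖ := hz1.trans_le hαβ
  have hadb_le : ∀ M : ℝ, ‖a‖ * ‖z₂‖ ≤ M → ‖z₁‖ * ‖z₂‖ ≤ M → ‖a*d - b‖ ≤ M := by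
    intro M h1 h2
    refine (norm_sub_le_max17 _ _).trans (max_le ?_ ?_)
    · rw [norm_mul]
      refine le_trans ?_ h1
      have hd2 : ‖d‖ ≤ ‖z₂‖ := by
        have h : ‖d‖ = ‖z₁ + z₂‖ := by rw [hsum, norm_neg]
        rw [h]
        exact (IsUltrametricDist.norm_add_le_max _ _).trans (max_le hαβ le_rfl)
      exact mul_le_mul_of_nonneg_left hd2 (norm_nonneg a)
    · rw [hbn]; exact h2
  -- a generic small-radius helper
  have small : ∀ x : K, 0 < ‖x‖ → ‖x‖ < ‖z₁‖ → ‖x‖ * ‖a‖ < ‖z₁‖ * ‖z₂‖ →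
      ‖(a*d*x^2 - b*x^2 + 2*a*b*x + b^2)/((x^2 + d*x + b)^2)‖ = 1 := by
    intro x hx0 hx1 hxa
    apply caseA17 a b d z₁ z₂ x hsum hprod hb hαβ hx1
    · rw [hbn]
      have hbd : ‖a*d - b‖ ≤ max (‖a‖ * ‖z₂‖) (‖z₁‖ * ‖z₂‖) :=
        hadb_le _ (le_max_left _ _) (le_max_right _ _)
      rcases max_cases (‖a‖ * ‖z₂‖) (‖z₁‖ * ‖z₂‖) with ⟨hm, _⟩ | ⟨hm, _⟩ <;>
          rw [hm] at hbd
      · calc ‖a*d - b‖ * ‖x‖^2 ≤ (‖a‖ * ‖z₂‖) * ‖x‖^2 :=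
              mul_le_mul_of_nonneg_right hbd (sq_nonneg _)
          _ = (‖x‖ * ‖a‖) * (‖z₂‖ * ‖x‖) := by ring
          _ < (‖z₁‖ * ‖z₂‖) * (‖z₂‖ * ‖x‖) :=
              mul_lt_mul_of_pos_right hxa (mul_pos hz2 hx0)
          _ ≤ (‖z₁‖ * ‖z₂‖) * (‖z₂‖ * ‖z₁‖) := by
              refine mul_le_mul_of_nonneg_left ?_ (mul_pos hz1 hz2).le
              exact mul_le_mul_of_nonneg_left hx1.le hz2.le
          _ = (‖z₁‖ * ‖z₂‖)^2 := by ring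
      · calc ‖a*d - b‖ * ‖x‖^2 ≤ (‖z₁‖ * ‖z₂‖) * ‖x‖^2 :=
              mul_le_mul_of_nonneg_right hbd (sq_nonneg _)
          _ < (‖z₁‖ * ‖z₂‖)^2 := by
              nlinarith [mul_lt_mul'' hx1 (hx1.trans_le hαβ) (norm_nonneg x) (norm_nonneg x),
                mul_pos hz1 hz2]
    · rw [hbn]
      calc ‖a‖ * (‖z₁‖ * ‖z₂‖) * ‖x‖ = (‖z₁‖ * ‖z₂‖) * (‖x‖ * ‖a‖) := by ring
        _ < (‖z₁‖ * ‖z₂‖) * (‖z₁‖ * ‖z₂‖) :=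
            mul_lt_mul_of_pos_left hxa (mul_pos hz1 hz2)
        _ = (‖z₁‖ * ‖z₂‖)^2 := by ring
  split_ifs at hr with hA hA2
  · obtain ⟨hr0, hr1⟩ := hr
    intro x hx
    have hx0 : (0:ℝ) < ‖x‖ := hx ▸ hr0
    have hx1 : ‖x‖ < ‖z₁‖ := hx ▸ hr1
    refine small x hx0 hx1 ?_
    calc ‖x‖ * ‖a‖ < ‖z₁‖ * ‖z₂‖ := mul_lt_mul'' hx1 hA (norm_nonneg x) (norm_nonneg a)
      _ ≤ ‖z₁‖ * ‖z₂‖ := le_rfl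
  · rcases hr with ⟨hr0, hr1⟩ | ⟨hr0, hr1⟩
    · intro x hx
      have hx0 : (0:ℝ) < ‖x‖ := hx ▸ hr0
      have hx1 : ‖x‖ < ‖z₁‖ := hx ▸ hr1
      refine small x hx0 hx1 ?_
      rw [hA2]
      exact mul_lt_mul_of_pos_right hx1 hz2
    · intro x hx
      exact caseB17 a b d z₁ z₂ x hsum hprod hb hA2 (hx ▸ hr0) (hx ▸ hr1)
  · push_neg at hA
    have hA' : ‖z₂‖ < ‖a‖ := lt_of_le_of_ne hA (Ne.symm hA2)
    have ha0' : (0:ℝ) < ‖a‖ := hz2.trans hA'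
    obtain ⟨hr0, hr1⟩ := hr
    intro x hx
    have hx0 : (0:ℝ) < ‖x‖ := hx ▸ hr0
    have hxr : ‖x‖ < ‖z₁‖*‖z₂‖/‖a‖ := hx ▸ hr1
    have hxa : ‖x‖ * ‖a‖ < ‖z₁‖ * ‖z₂‖ := by
      rw [lt_div_iff₀ ha0'] at hxr; exact hxr
    have hx1 : ‖x‖ < ‖z₁‖ := by
      refine hxr.trans ?_
      rw [div_lt_iff₀ ha0']
      exact mul_lt_mul_of_pos_left hA' hz1
    exact small x hx0 hx1 hxa
end
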